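/- Let S and A be finite nonempty sets, let T : S × A × S → ℝ be a transition kernel, let γ ∈ [0,1), let h₀ be a probability vector on S, and let r : S × A → ℝ satisfy |r(s,a)| ≤ R_max with R_max ≥ 0. Let p, p* : S → A → ℝ be functions with values in [0,1] and let m, m* : S → A → {0,1} be state-dependent causal masks. Suppose the masked functions π(a|s) = m(s,a)·p(s,a) and π*(a|s) = m*(s,a)·p*(s,a) are policies (i.e., Σ_{a} π(a|s) = 1 and Σ_a π*(a|s) = 1 for every s). Let V_π = (1/(1−γ))·Σ_{(s,a)} ρ_π(s,a)·r(s,a) and V_{π*} = (1/(1−γ))·Σ_{(s,a)} ρ_{π*}(s,a)·r(s,a) be the corresponding discounted values. Then V_{π*} − V_π ≤ (R_max/(1−γ)^2)·max_{s∈S} ( Σ_{a∈A} |m(s,a) − m*(s,a)| + card{a ∈ A : m(s,a) = 1 ∧ m*(s,a) = 1} ). -/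

import Mathlib

/-!
For `{0,1}`-valued masks, `|m - m*| + [m = 1 ∧ m* = 1] = [m = 1 ∨ m* = 1]`, so the bracket at a
state counts the actions allowed by either mask. If it is at most one at every state, both causal
policies are supported on the same single action, hence equal, and the two values coincide.
Otherwise the maximum is at least `2`, and the crude bound `|V| ≤ R_max / (1 - γ)`, valid because
occupancies and policies are probability vectors, already gives the claim since `1 - γ ≤ 1`.
-/

open Finset Matrix

lemma abs_sum_mul_le_of_mem_stdSimplex {ι : Type*} [Fintype ι] {w f : ι → ℝ} {R : ℝ}
    (hw : w ∈ stdSimplex ℝ ι) (hf : ∀ i, |f i| ≤ R) : |∑ i, w i * f i| ≤ R :=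
  calc |∑ i, w i * f i| ≤ ∑ i, w i * |f i| := by
        simpa only [abs_mul, abs_of_nonneg (hw.1 _)] using
          abs_sum_le_sum_abs (fun i => w i * f i) univ
    _ ≤ ∑ i, w i * R := sum_le_sum fun i _ => mul_le_mul_of_nonneg_left (hf i) (hw.1 i)
    _ = R := by rw [← sum_mul, hw.2, one_mul]

section Policy

variable {S A : Type*} [Fintype S] [Fintype A]

def inducedMatrix (T : S → A → S → ℝ) (π : S → A → ℝ) : Matrix S S ℝ :=
  of fun s' s => ∑ a, T s a s' * π s a

noncomputable def discountedOccupancy [DecidableEq S] (γ : ℝ) (P : Matrix S S ℝ) (h₀ : S → ℝ)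
    (s : S) : ℝ :=
  (1 - γ) * ∑' t : ℕ, γ ^ t * (P ^ t *ᵥ h₀) s

noncomputable def discountedValue (γ : ℝ) (π : S → A → ℝ) (h : S → ℝ) (r : S → A → ℝ) : ℝ :=
  1 / (1 - γ) * ∑ s, ∑ a, π s a * h s * r s a

lemma inducedMatrix_mem_colStochastic [DecidableEq S] {T : S → A → S → ℝ}
    (hT0 : ∀ s a s', 0 ≤ T s a s') (hT1 : ∀ s a, ∑ s', T s a s' = 1)
    {π : S → A → ℝ} (hπ : ∀ s, π s ∈ stdSimplex ℝ A) :
    inducedMatrix T π ∈ colStochastic ℝ S := by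
  refine mem_colStochastic_iff_sum.2 ⟨fun s' s => ?_, fun s => ?_⟩
  · exact sum_nonneg fun a _ => mul_nonneg (hT0 s a s') ((hπ s).1 a)
  · simp only [inducedMatrix, of_apply]
    rw [sum_comm]
    simp only [← sum_mul, hT1, one_mul, (hπ s).2]

lemma pow_mulVec_mem_stdSimplex [DecidableEq S] {P : Matrix S S ℝ}
    (hP : P ∈ colStochastic ℝ S) {v : S → ℝ} (hv : v ∈ stdSimplex ℝ S) (t : ℕ) :
    P ^ t *ᵥ v ∈ stdSimplex ℝ S :=
  ⟨nonneg_mulVec_of_mem_colStochastic (pow_mem hP t) hv.1,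
    (sum_mulVec_of_mem_colStochastic (pow_mem hP t)).trans hv.2⟩

lemma discountedOccupancy_mem_stdSimplex [DecidableEq S] {γ : ℝ} (hγ0 : 0 ≤ γ) (hγ1 : γ < 1)
    {P : Matrix S S ℝ} (hP : P ∈ colStochastic ℝ S) {h₀ : S → ℝ} (hh₀ : h₀ ∈ stdSimplex ℝ S) :
    discountedOccupancy γ P h₀ ∈ stdSimplex ℝ S := by
  have hstep := pow_mulVec_mem_stdSimplex hP hh₀
  have hsummable (s : S) : Summable fun t : ℕ => γ ^ t * (P ^ t *ᵥ h₀) s :=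
    (summable_geometric_of_lt_one hγ0 hγ1).of_nonneg_of_le
      (fun t => mul_nonneg (pow_nonneg hγ0 t) ((hstep t).1 s))
      (fun t => mul_le_of_le_one_right (pow_nonneg hγ0 t) (mem_Icc_of_mem_stdSimplex (hstep t) s).2)
  refine ⟨fun s => mul_nonneg (sub_nonneg.2 hγ1.le)
    (tsum_nonneg fun t => mul_nonneg (pow_nonneg hγ0 t) ((hstep t).1 s)), ?_⟩
  calc ∑ s, discountedOccupancy γ P h₀ s
      = (1 - γ) * ∑' t : ℕ, ∑ s, γ ^ t * (P ^ t *ᵥ h₀) s := by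
        simp only [discountedOccupancy]
        rw [← mul_sum, Summable.tsum_finsetSum fun s _ => hsummable s]
    _ = (1 - γ) * ∑' t : ℕ, γ ^ t := by simp only [← mul_sum, (hstep _).2, mul_one]
    _ = 1 := by rw [tsum_geometric_of_lt_one hγ0 hγ1]; field_simp [(sub_pos.2 hγ1).ne']

lemma policy_mul_occupancy_mem_stdSimplex {π : S → A → ℝ} (hπ : ∀ s, π s ∈ stdSimplex ℝ A)
    {h : S → ℝ} (hh : h ∈ stdSimplex ℝ S) :
    (fun x : S × A => π x.1 x.2 * h x.1) ∈ stdSimplex ℝ (S × A) := by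
  refine ⟨fun x => mul_nonneg ((hπ x.1).1 x.2) (hh.1 x.1), ?_⟩
  simp only [Fintype.sum_prod_type, ← sum_mul, (hπ _).2, one_mul, hh.2]

lemma abs_discountedValue_le {γ R : ℝ} (hγ1 : γ < 1) {π : S → A → ℝ}
    (hπ : ∀ s, π s ∈ stdSimplex ℝ A) {h : S → ℝ} (hh : h ∈ stdSimplex ℝ S) {r : S → A → ℝ}
    (hr : ∀ s a, |r s a| ≤ R) : |discountedValue γ π h r| ≤ R / (1 - γ) := by
  have hsum := abs_sum_mul_le_of_mem_stdSimplex (policy_mul_occupancy_mem_stdSimplex hπ hh)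
    fun x => hr x.1 x.2
  rw [Fintype.sum_prod_type] at hsum
  rw [discountedValue, abs_mul, abs_of_pos (one_div_pos.2 (sub_pos.2 hγ1)), one_div_mul_eq_div]
  exact div_le_div_of_nonneg_right hsum (sub_pos.2 hγ1).le

lemma discountedValue_sub_le {γ R : ℝ} (hγ0 : 0 ≤ γ) (hγ1 : γ < 1) (hR : 0 ≤ R)
    {π π' : S → A → ℝ} (hπ : ∀ s, π s ∈ stdSimplex ℝ A) (hπ' : ∀ s, π' s ∈ stdSimplex ℝ A)
    {h h' : S → ℝ} (hh : h ∈ stdSimplex ℝ S) (hh' : h' ∈ stdSimplex ℝ S) {r : S → A → ℝ}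
    (hr : ∀ s a, |r s a| ≤ R) :
    discountedValue γ π' h' r - discountedValue γ π h r ≤ R / (1 - γ) ^ 2 * 2 := by
  have hγ : (1 - γ) ^ 2 ≤ 1 - γ := pow_le_of_le_one (by linarith) (by linarith) two_ne_zero
  have hdiv : R / (1 - γ) ≤ R / (1 - γ) ^ 2 :=
    div_le_div_of_nonneg_left hR (pow_pos (sub_pos.2 hγ1) 2) hγ
  have hV := abs_le.1 (abs_discountedValue_le hγ1 hπ hh hr)
  have hV' := abs_le.1 (abs_discountedValue_le hγ1 hπ' hh' hr)
  linarith [hV.1, hV'.2]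

end Policy

section Mask

variable {A : Type*} [Fintype A]

lemma mask_mul_mem_stdSimplex {x p : A → ℝ} (hx : ∀ a, x a = 0 ∨ x a = 1) (hp : ∀ a, 0 ≤ p a)
    (hsum : ∑ a, x a * p a = 1) : (fun a => x a * p a) ∈ stdSimplex ℝ A := by
  refine ⟨fun a => mul_nonneg ?_ (hp a), hsum⟩
  rcases hx a with h | h <;> norm_num [h]

lemma sum_abs_sub_add_card_eq_card_filter_or {x y : A → ℝ} (hx : ∀ a, x a = 0 ∨ x a = 1)
    (hy : ∀ a, y a = 0 ∨ y a = 1) :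
    ∑ a, |x a - y a| + (Nat.card {a // x a = 1 ∧ y a = 1} : ℝ) = #{a | x a = 1 ∨ y a = 1} := by
  classical
  rw [Nat.card_eq_fintype_card, Fintype.card_subtype, natCast_card_filter, natCast_card_filter,
    ← sum_add_distrib]
  refine sum_congr rfl fun a _ => ?_
  rcases hx a with h | h <;> rcases hy a with h' | h' <;> norm_num [h, h']

lemma eq_of_sum_eq_of_card_le_one {f g : A → ℝ} {U : Finset A} (hU : #U ≤ 1)
    (hf : ∀ a ∉ U, f a = 0) (hg : ∀ a ∉ U, g a = 0) (hfg : ∑ a, f a = ∑ a, g a) : f = g := by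
  funext a
  by_cases ha : a ∈ U
  · have hsingle (φ : A → ℝ) (hφ : ∀ b ∉ U, φ b = 0) : ∑ b, φ b = φ a :=
      sum_eq_single a (fun b _ hb => hφ b fun hbU => hb (card_le_one.1 hU b hbU a ha)) (by simp)
    rwa [hsingle f hf, hsingle g hg] at hfg
  · rw [hf a ha, hg a ha]

lemma mask_mul_eq_of_discrepancy_lt_two {x y p q : A → ℝ} (hx : ∀ a, x a = 0 ∨ x a = 1)
    (hy : ∀ a, y a = 0 ∨ y a = 1) (hxp : ∑ a, x a * p a = 1) (hyq : ∑ a, y a * q a = 1)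
    (hlt : ∑ a, |x a - y a| + (Nat.card {a // x a = 1 ∧ y a = 1} : ℝ) < 2) :
    (fun a => x a * p a) = fun a => y a * q a := by
  classical
  rw [sum_abs_sub_add_card_eq_card_filter_or hx hy] at hlt
  have hcard : #({a | x a = 1 ∨ y a = 1} : Finset A) < 2 := by exact_mod_cast hlt
  refine eq_of_sum_eq_of_card_le_one (by omega : #({a | x a = 1 ∨ y a = 1} : Finset A) ≤ 1)
    (fun a ha => ?_) (fun a ha => ?_) (hxp.trans hyq.symm)
  all_goals simp only [mem_filter, mem_univ, true_and, not_or] at ha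
  · rw [(hx a).resolve_right ha.1, zero_mul]
  · rw [(hy a).resolve_right ha.2, zero_mul]

end Mask

theorem causal_policy_performance_guarantee_general {S A : Type*}
    [Fintype S] [Nonempty S] [DecidableEq S] [Fintype A]
    (T : S → A → S → ℝ)
    (hT0 : ∀ s a s', 0 ≤ T s a s')
    (hT1 : ∀ s a, ∑ s', T s a s' = 1)
    (γ : ℝ) (hγ : γ ∈ Set.Ico (0 : ℝ) 1)
    (h₀ : S → ℝ) (hh₀0 : ∀ s, 0 ≤ h₀ s) (hh₀1 : ∑ s, h₀ s = 1)
    (r : S → A → ℝ) (Rmax : ℝ) (hRmax : 0 ≤ Rmax)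
    (hr : ∀ s a, |r s a| ≤ Rmax)
    (p pstar : S → A → ℝ)
    (hp : ∀ s a, p s a ∈ Set.Icc (0 : ℝ) 1)
    (hpstar : ∀ s a, pstar s a ∈ Set.Icc (0 : ℝ) 1)
    (m mstar : S → A → ℝ)
    (hm : ∀ s a, m s a = 0 ∨ m s a = 1)
    (hmstar : ∀ s a, mstar s a = 0 ∨ mstar s a = 1)
    -- the masked functions are policies
    (hπ1 : ∀ s, ∑ a, m s a * p s a = 1)
    (hπstar1 : ∀ s, ∑ a, mstar s a * pstar s a = 1)
    -- induced transition matrices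
    (Pπ Pπstar : Matrix S S ℝ)
    (hPπ : ∀ s' s, Pπ s' s = ∑ a, T s a s' * (m s a * p s a))
    (hPπstar : ∀ s' s, Pπstar s' s = ∑ a, T s a s' * (mstar s a * pstar s a))
    -- discounted state occupancies
    (hπocc hπstarocc : S → ℝ)
    (hocc : ∀ s, hπocc s = (1 - γ) * ∑' t : ℕ, γ ^ t * (Pπ ^ t).mulVec h₀ s)
    (hoccstar : ∀ s, hπstarocc s = (1 - γ) * ∑' t : ℕ, γ ^ t * (Pπstar ^ t).mulVec h₀ s) :
    (1 / (1 - γ)) * ∑ s, ∑ a, (mstar s a * pstar s a * hπstarocc s) * r s a -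
        (1 / (1 - γ)) * ∑ s, ∑ a, (m s a * p s a * hπocc s) * r s a ≤
      (Rmax / (1 - γ) ^ 2) *
        Finset.univ.sup' Finset.univ_nonempty
          (fun s => (∑ a, |m s a - mstar s a|) +
            (Nat.card {a : A // m s a = 1 ∧ mstar s a = 1} : ℝ)) := by
  obtain ⟨hγ0, hγ1⟩ := hγ
  set F : S → ℝ := fun s => (∑ a, |m s a - mstar s a|) +
    (Nat.card {a : A // m s a = 1 ∧ mstar s a = 1} : ℝ)
  rcases lt_or_ge (univ.sup' univ_nonempty F) 2 with hsmall | hlarge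
  · have hpol (s : S) : ∀ a, m s a * p s a = mstar s a * pstar s a :=
      congrFun <| mask_mul_eq_of_discrepancy_lt_two (hm s) (hmstar s) (hπ1 s) (hπstar1 s)
        ((le_sup' F (mem_univ s)).trans_lt hsmall)
    have hP : Pπ = Pπstar := Matrix.ext fun s' s => by simp only [hPπ, hPπstar, hpol]
    have hocc_eq : hπocc = hπstarocc := funext fun s => by rw [hocc, hoccstar, hP]
    simp only [hpol, hocc_eq, sub_self]
    have hF0 : 0 ≤ F (Classical.arbitrary S) := by positivity
    exact mul_nonneg (div_nonneg hRmax (sq_nonneg _)) (le_sup'_of_le F (mem_univ _) hF0)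
  · have hπ s := mask_mul_mem_stdSimplex (hm s) (fun a => (hp s a).1) (hπ1 s)
    have hπstar s := mask_mul_mem_stdSimplex (hmstar s) (fun a => (hpstar s a).1) (hπstar1 s)
    have hocc_mem : hπocc ∈ stdSimplex ℝ S := by
      rw [funext hocc, show Pπ = inducedMatrix T _ from Matrix.ext hPπ]
      exact discountedOccupancy_mem_stdSimplex hγ0 hγ1
        (inducedMatrix_mem_colStochastic hT0 hT1 hπ) ⟨hh₀0, hh₀1⟩
    have hoccstar_mem : hπstarocc ∈ stdSimplex ℝ S := by
      rw [funext hoccstar, show Pπstar = inducedMatrix T _ from Matrix.ext hPπstar]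
      exact discountedOccupancy_mem_stdSimplex hγ0 hγ1
        (inducedMatrix_mem_colStochastic hT0 hT1 hπstar) ⟨hh₀0, hh₀1⟩
    calc _ ≤ Rmax / (1 - γ) ^ 2 * 2 :=
          discountedValue_sub_le hγ0 hγ1 hRmax hπ hπstar hocc_mem hoccstar_mem hr
      _ ≤ _ := mul_le_mul_of_nonneg_left hlarge (div_nonneg hRmax (sq_nonneg _))

/-- **Theorem 3 (performance guarantee).**
For the causal policies `π(a|s) = m(s,a) p(s,a)` and `π*(a|s) = m*(s,a) p*(s,a)`
obtained from base policies via `{0,1}`-valued causal masks, the discounted values satisfy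
`V_{π*} - V_π ≤ (R_max/(1-γ)²) maxₛ (‖m(s,·) - m*(s,·)‖₁ + #{a | m(s,a) = 1 ∧ m*(s,a) = 1})`. -/
theorem causal_policy_performance_guarantee {S A : Type*}
    [Fintype S] [Nonempty S] [DecidableEq S] [Fintype A] [Nonempty A]
    (T : S → A → S → ℝ)
    (hT0 : ∀ s a s', 0 ≤ T s a s')
    (hT1 : ∀ s a, ∑ s', T s a s' = 1)
    (γ : ℝ) (hγ : γ ∈ Set.Ico (0 : ℝ) 1)
    (h₀ : S → ℝ) (hh₀0 : ∀ s, 0 ≤ h₀ s) (hh₀1 : ∑ s, h₀ s = 1)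
    (r : S → A → ℝ) (Rmax : ℝ) (hRmax : 0 ≤ Rmax)
    (hr : ∀ s a, |r s a| ≤ Rmax)
    (p pstar : S → A → ℝ)
    (hp : ∀ s a, p s a ∈ Set.Icc (0 : ℝ) 1)
    (hpstar : ∀ s a, pstar s a ∈ Set.Icc (0 : ℝ) 1)
    (m mstar : S → A → ℝ)
    (hm : ∀ s a, m s a = 0 ∨ m s a = 1)
    (hmstar : ∀ s a, mstar s a = 0 ∨ mstar s a = 1)
    -- the masked functions are policies
    (hπ1 : ∀ s, ∑ a, m s a * p s a = 1)
    (hπstar1 : ∀ s, ∑ a, mstar s a * pstar s a = 1)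
    -- induced transition matrices
    (Pπ Pπstar : Matrix S S ℝ)
    (hPπ : ∀ s' s, Pπ s' s = ∑ a, T s a s' * (m s a * p s a))
    (hPπstar : ∀ s' s, Pπstar s' s = ∑ a, T s a s' * (mstar s a * pstar s a))
    -- discounted state occupancies
    (hπocc hπstarocc : S → ℝ)
    (hocc : ∀ s, hπocc s = (1 - γ) * ∑' t : ℕ, γ ^ t * (Pπ ^ t).mulVec h₀ s)
    (hoccstar : ∀ s, hπstarocc s = (1 - γ) * ∑' t : ℕ, γ ^ t * (Pπstar ^ t).mulVec h₀ s) :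
    (1 / (1 - γ)) * ∑ s, ∑ a, (mstar s a * pstar s a * hπstarocc s) * r s a -
        (1 / (1 - γ)) * ∑ s, ∑ a, (m s a * p s a * hπocc s) * r s a ≤
      (Rmax / (1 - γ) ^ 2) *
        Finset.univ.sup' Finset.univ_nonempty
          (fun s => (∑ a, |m s a - mstar s a|) +
            (Nat.card {a : A // m s a = 1 ∧ mstar s a = 1} : ℝ)) :=
  causal_policy_performance_guarantee_general T hT0 hT1 γ hγ h₀ hh₀0 hh₀1 r Rmax hRmax hr p pstar hp
    hpstar m mstar hm hmstar hπ1 hπstar1 Pπ Pπstar hPπ hPπstar hπocc hπstarocc hocc hoccstar
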